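/- arXiv:1902.05681 — 2 statements merged into one kernel-verified Lean document; each statement's English description precedes it below -/
import Mathlib

section
/- The polynomial f(ζ) = (2 T_n((ζ+2)/2) - 2)/ζ is a monic polynomial of degree n-1 with integer coefficients, for every n ≥ 1. -/
open Polynomial

theorem dickson_aux : ∀ n : ℕ, (Polynomial.dickson 1 (1:ℤ) n).natDegree = n ∧
    (1 ≤ n → (Polynomial.dickson 1 (1:ℤ) n).Monic)
  | 0 => by
    constructor
    · simp [Polynomial.dickson_zero]
      norm_num
    · omega
  | 1 => by
    simp [Polynomial.dickson_one, monic_X]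
  | (n+2) => by
    have ih1 := dickson_aux (n+1)
    have ih0 := dickson_aux n
    rw [Polynomial.dickson_add_two]
    have hm : (X * Polynomial.dickson 1 (1:ℤ) (n+1)).Monic :=
      (monic_X).mul (ih1.2 (by omega))
    have hdeg : (X * Polynomial.dickson 1 (1:ℤ) (n+1)).natDegree = n + 2 := by
      rw [natDegree_mul X_ne_zero (ih1.2 (by omega)).ne_zero, natDegree_X, ih1.1]
      omega
    have hlt : (C (1:ℤ) * Polynomial.dickson 1 (1:ℤ) n).degree <
        (X * Polynomial.dickson 1 (1:ℤ) (n+1)).degree := by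
      simp only [C_1, one_mul]
      rw [degree_eq_natDegree hm.ne_zero, hdeg]
      calc (Polynomial.dickson 1 (1:ℤ) n).degree ≤ n := by
            exact_mod_cast degree_le_natDegree.trans (by rw [ih0.1])
        _ < (↑(n+2) : WithBot ℕ) := by exact_mod_cast Nat.lt_add_of_pos_right (by norm_num)
    have hmonic := hm.sub_of_left hlt
    refine ⟨?_, fun _ => hmonic⟩
    rw [← hdeg]
    apply natDegree_sub_eq_left_of_natDegree_lt
    rw [hdeg]
    simp only [C_1, one_mul]
    omega

theorem exists_monic_quotient_chebyshev (n : ℕ) (hn : 1 ≤ n) :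
    ∃ f : ℤ[X], f.Monic ∧ f.natDegree = n - 1 ∧
      f.map (Int.castRingHom ℚ) * X =
        2 * (Polynomial.Chebyshev.T ℚ n).comp (Polynomial.C (1 / 2) * (X + 2)) - 2 := by
  set d : ℤ[X] := Polynomial.dickson 1 (1:ℤ) n with hd
  have hdmonic : d.Monic := (dickson_aux n).2 hn
  have hddeg : d.natDegree = n := (dickson_aux n).1
  have hX2 : (X + 2 : ℤ[X]) = X + C 2 := by simp
  set g : ℤ[X] := d.comp (X + 2) - 2 with hg
  have hcompmonic : (d.comp (X + 2)).Monic :=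
    hdmonic.comp (by simpa using monic_X_add_C (2:ℤ))
      (by rw [hX2, natDegree_X_add_C]; norm_num)
  have hcompdeg : (d.comp (X + 2)).natDegree = n := by
    rw [natDegree_comp, hddeg, hX2, natDegree_X_add_C, mul_one]
  have hglt : (2 : ℤ[X]).degree < (d.comp (X + 2)).degree := by
    rw [degree_eq_natDegree hcompmonic.ne_zero, hcompdeg]
    calc (2 : ℤ[X]).degree ≤ 0 := degree_le_of_natDegree_le (by simp)
      _ < (n : WithBot ℕ) := by exact_mod_cast hn
  have hgmonic : g.Monic := hcompmonic.sub_of_left hglt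
  have hgdeg : g.natDegree = n := by
    rw [hg, ← hcompdeg]
    apply natDegree_sub_eq_left_of_natDegree_lt
    rw [hcompdeg]
    have : (2 : ℤ[X]).natDegree = 0 := by simp
    omega
  have heval : g.eval 0 = 0 := by
    have h2 : d.eval 2 = 2 := by
      have := Polynomial.dickson_one_one_eval_add_inv (1:ℤ) 1 (by norm_num) n
      simpa using this
    simp [hg, eval_comp, h2]
  have hdvd : X ∣ g := by
    rw [X_dvd_iff, ← heval]
    simp [coeff_zero_eq_eval_zero]
  obtain ⟨f, hf⟩ := hdvd
  have hfmonic : f.Monic := monic_X.of_mul_monic_left (by rwa [← hf])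
  have hfdeg : f.natDegree = n - 1 := by
    have := hgdeg
    rw [hf, natDegree_mul X_ne_zero hfmonic.ne_zero, natDegree_X] at this
    omega
  refine ⟨f, hfmonic, hfdeg, ?_⟩
  have hmapg : g.map (Int.castRingHom ℚ) = f.map (Int.castRingHom ℚ) * X := by
    rw [hf, Polynomial.map_mul, map_X, mul_comm]
  rw [← hmapg, hg, Polynomial.map_sub, Polynomial.map_comp, Polynomial.map_dickson]
  have hcheb := Polynomial.dickson_one_one_eq_chebyshev_T (R := ℚ) n
  rw [map_one, hcheb]
  have hinv : (⅟(2:ℚ)) = 1/2 := by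
    rw [invOf_eq_inv]; norm_num
  rw [hinv]
  simp only [Polynomial.map_add, map_X, Polynomial.map_ofNat, mul_comp, ofNat_comp,
    comp_assoc, mul_comp, C_comp, X_comp]
  norm_num
end

section
/- Let P̃(z) be a monic polynomial of degree 2s with complex roots 1, 1, z_1, 1/z_1, ..., z_{s-1}, 1/z_{s-1} (counted with multiplicity), where each z_j ≠ 1. Then ∏_{j=1}^{n-1} P̃(ε^j) = n^2 · ∏_{j=1}^{s-1} (z_j^n + z_j^{-n} - 2)/(z_j + z_j^{-1} - 2), where ε = e^{2πi/n} is a primitive n-th root of unity. -/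
open Polynomial Finset

/-!
Dividing `X ^ n - 1 = ∏_{j < n} (X - ε ^ j)` by `X - 1` gives
`∏_{j = 1}^{n - 1} (x - ε ^ j) = 1 + x + ⋯ + x ^ (n - 1)`. Grouping the roots of `P̃` in pairs
`(a, b)`, each pair contributes the product of the two geometric sums at `a` and `b`: this is `n²`
for the pair `(1, 1)` and `(zⁿ + z⁻ⁿ - 2) / (z + z⁻¹ - 2)` for a pair `(z, z⁻¹)`.
-/

namespace IsPrimitiveRoot

variable {R : Type*} [CommRing R] [IsDomain R] {ζ : R} {n : ℕ}

theorem prod_X_sub_C_pow_succ_eq_geom_sum (hζ : IsPrimitiveRoot ζ n) (hn : 0 < n) :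
    ∏ j ∈ range (n - 1), (X - C (ζ ^ (j + 1))) = ∑ k ∈ range n, (X : R[X]) ^ k := by
  have hroots : (X - C 1) * ∏ j ∈ range (n - 1), (X - C (ζ ^ (j + 1))) = X ^ n - C 1 := by
    rw [X_pow_sub_C_eq_prod hζ hn (one_pow n), ← Nat.sub_add_cancel hn, prod_range_succ']
    simp [mul_comm]
  refine mul_left_cancel₀ (X_sub_C_ne_zero 1) (hroots.trans ?_)
  rw [C_1, mul_comm, geom_sum_mul]

theorem prod_sub_pow_succ_eq_geom_sum (hζ : IsPrimitiveRoot ζ n) (hn : 0 < n) (x : R) :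
    ∏ j ∈ range (n - 1), (x - ζ ^ (j + 1)) = ∑ k ∈ range n, x ^ k := by
  simpa [eval_prod, eval_finsetSum] using
    congrArg (eval x) (hζ.prod_X_sub_C_pow_succ_eq_geom_sum hn)

theorem prod_pow_succ_sub_mul_pow_succ_sub (hζ : IsPrimitiveRoot ζ n) (hn : 0 < n) (a b : R) :
    ∏ j ∈ range (n - 1), (ζ ^ (j + 1) - a) * (ζ ^ (j + 1) - b) =
      (∑ k ∈ range n, a ^ k) * ∑ k ∈ range n, b ^ k := by
  simp_rw [← hζ.prod_sub_pow_succ_eq_geom_sum hn, ← prod_mul_distrib]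
  exact prod_congr rfl fun _ _ ↦ by ring

end IsPrimitiveRoot

theorem add_inv_sub_two_eq {K : Type*} [Field K] {x : K} (hx : x ≠ 0) :
    x + x⁻¹ - 2 = -((x - 1) * (x⁻¹ - 1)) := by
  field_simp; ring

theorem geom_sum_mul_geom_sum_inv {K : Type*} [Field K] {w : K} (hw0 : w ≠ 0) (hw1 : w ≠ 1)
    (n : ℕ) :
    (∑ k ∈ range n, w ^ k) * ∑ k ∈ range n, w⁻¹ ^ k = (w ^ n + w⁻¹ ^ n - 2) / (w + w⁻¹ - 2) := by
  rw [geom_sum_eq hw1, geom_sum_eq (inv_ne_one.2 hw1), div_mul_div_comm, inv_pow,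
    add_inv_sub_two_eq (pow_ne_zero n hw0), add_inv_sub_two_eq hw0, neg_div_neg_eq]

theorem prod_eval_at_roots_of_unity_general (n s : ℕ) (hn : 1 ≤ n)
    (z : Fin (s - 1) → ℂ) (hz0 : ∀ j, z j ≠ 0) (hz1 : ∀ j, z j ≠ 1)
    (P : ℂ[X])
    (hP : P = (X - 1) ^ 2 *
        ∏ j, (X - Polynomial.C (z j)) * (X - Polynomial.C (z j)⁻¹))
    (ε : ℂ) (hε : ε = Complex.exp (2 * Real.pi * Complex.I / n)) :
    ∏ j ∈ Finset.range (n - 1), P.eval (ε ^ (j + 1)) =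
      (n : ℂ) ^ 2 * ∏ j, ((z j) ^ n + (z j)⁻¹ ^ n - 2) / (z j + (z j)⁻¹ - 2) := by
  have hprim : IsPrimitiveRoot ε n := hε ▸ Complex.isPrimitiveRoot_exp n (by omega)
  simp only [hP, sq, eval_mul, eval_sub, eval_X, eval_one, eval_C, eval_prod]
  rw [prod_mul_distrib, prod_comm, hprim.prod_pow_succ_sub_mul_pow_succ_sub hn]
  simp_rw [hprim.prod_pow_succ_sub_mul_pow_succ_sub hn, geom_sum_mul_geom_sum_inv (hz0 _) (hz1 _)]
  simp only [one_pow, sum_const, card_range, nsmul_one]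

theorem prod_eval_at_roots_of_unity (n s : ℕ) (hn : 1 ≤ n) (hs : 1 ≤ s)
    (z : Fin (s - 1) → ℂ) (hz0 : ∀ j, z j ≠ 0) (hz1 : ∀ j, z j ≠ 1)
    (P : ℂ[X])
    (hP : P = (X - 1) ^ 2 *
        ∏ j, (X - Polynomial.C (z j)) * (X - Polynomial.C (z j)⁻¹))
    (ε : ℂ) (hε : ε = Complex.exp (2 * Real.pi * Complex.I / n)) :
    ∏ j ∈ Finset.range (n - 1), P.eval (ε ^ (j + 1)) =
      (n : ℂ) ^ 2 * ∏ j, ((z j) ^ n + (z j)⁻¹ ^ n - 2) / (z j + (z j)⁻¹ - 2) :=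
  prod_eval_at_roots_of_unity_general n s hn z hz0 hz1 P hP ε hε
end
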